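/- arXiv:2004.08169 — 5 statements merged into one kernel-verified Lean document; each statement's English description precedes it below -/
import Mathlib

section
/- Let n ≥ 2 and let f : ℝⁿ → ℝ be of class C² satisfying the linear growth condition a₁|ξ| − a₂ ≤ f(ξ) ≤ a₃|ξ| + a₄ for all ξ ∈ ℝⁿ (with constants a₁, a₃ > 0, a₂, a₄ ≥ 0) and the ellipticity condition c₁(1+|ξ|)^{−μ}|η|² ≤ D²f(ξ)(η,η) ≤ c₂(1+|ξ|)^{−κ}|η|² for all ξ, η ∈ ℝⁿ, with constants c₁, c₂ > 0 and exponents μ > 1 and κ ≤ μ. Then κ ≤ 1. -/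
/-!
Suppose `κ > 1` and take orthogonal unit vectors `u, w` (here `n ≥ 2` is needed). Every point of
the line `t • w + ℝ • u` has norm at least `t`, so along it the second derivative of `f` is at most
`c₂ (1 + t) ^ (-κ)`, and the second difference `f (t w + v) + f (t w - v) - 2 f (t w)` with
`v = R t u` is at most `c₂ (1 + t) ^ (-κ) R² t² = t · o(1)`. Linear growth bounds the same second
difference below by `2 (a₁ R - |a₃|) t - O(1) = 2 a₁ t - O(1)` for `R = (a₁ + |a₃|) / a₁`.
-/

open Real Filter Topology
open scoped RealInnerProductSpace

theorem add_neg_one_le_two_mul_add_of_hasDerivAt2_le {g g' g'' : ℝ → ℝ} {C : ℝ}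
    (hg : ∀ s, HasDerivAt g (g' s) s) (hg' : ∀ s, HasDerivAt g' (g'' s) s)
    (hC : ∀ s, g'' s ≤ C) : g 1 + g (-1) ≤ 2 * g 0 + C := by
  have hconv : ConvexOn ℝ Set.univ (fun s => C * s ^ 2 / 2 - g s) := by
    refine convexOn_of_hasDerivWithinAt2_nonneg convex_univ (f' := fun s => C * s - g' s)
      (f'' := fun s => C - g'' s) ?_ (fun s _ => ?_) (fun s _ => ?_)
      (fun s _ => sub_nonneg.2 (hC s))
    · exact (continuous_const.mul (continuous_pow 2)).div_const 2 |>.sub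
        (continuous_iff_continuousAt.2 fun s => (hg s).continuousAt) |>.continuousOn
    · have h := (((hasDerivAt_pow 2 s).const_mul C).div_const 2).sub (hg s)
      exact (h.congr_deriv (by ring)).hasDerivWithinAt
    · have h := ((hasDerivAt_id' s).const_mul C).sub (hg' s)
      exact (h.congr_deriv (by ring)).hasDerivWithinAt
  have := hconv.2 (Set.mem_univ 1) (Set.mem_univ (-1)) (by norm_num : (0 : ℝ) ≤ 1 / 2)
    (by norm_num : (0 : ℝ) ≤ 1 / 2) (by norm_num)
  norm_num at this
  linarith

section Line

variable {E : Type*} [NormedAddCommGroup E] [NormedSpace ℝ E] {f : E → ℝ}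

theorem Differentiable.hasDerivAt_comp_line (hf : Differentiable ℝ f) (p v : E) (s : ℝ) :
    HasDerivAt (fun s : ℝ => f (p + s • v)) (fderiv ℝ f (p + s • v) v) s := by
  have hline : HasDerivAt (fun s : ℝ => p + s • v) v s := by
    simpa using ((hasDerivAt_id s).smul_const v).const_add p
  exact (hf _).hasFDerivAt.comp_hasDerivAt s hline

theorem ContDiff.apply_add_add_apply_sub_le (hf : ContDiff ℝ 2 f) {p v : E} {C : ℝ}
    (hC : ∀ s : ℝ, fderiv ℝ (fun x => fderiv ℝ f x v) (p + s • v) v ≤ C) :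
    f (p + v) + f (p - v) ≤ 2 * f p + C := by
  have hdf : Differentiable ℝ fun x => fderiv ℝ f x v :=
    ((hf.fderiv_right le_rfl).differentiable one_ne_zero).clm_apply (differentiable_const v)
  have := add_neg_one_le_two_mul_add_of_hasDerivAt2_le
    ((hf.differentiable two_ne_zero).hasDerivAt_comp_line p v) (hdf.hasDerivAt_comp_line p v) hC
  simpa [← sub_eq_add_neg] using this

end Line

theorem norm_le_norm_add_of_inner_eq_zero {F : Type*} [NormedAddCommGroup F]
    [InnerProductSpace ℝ F] {x y : F} (h : ⟪x, y⟫ = 0) : ‖x‖ ≤ ‖x + y‖ := by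
  refine (mul_self_le_mul_self_iff (norm_nonneg _) (norm_nonneg _)).2 ?_
  rw [norm_add_sq_eq_norm_sq_add_norm_sq_real h]
  exact le_add_of_nonneg_right (mul_self_nonneg _)

theorem tendsto_mul_one_add_rpow_neg_atTop {κ : ℝ} (hκ : 1 < κ) :
    Tendsto (fun t : ℝ => t * (1 + t) ^ (-κ)) atTop (𝓝 0) := by
  have hlim : Tendsto (fun t : ℝ => (1 + t) ^ (-(κ - 1))) atTop (𝓝 0) :=
    (tendsto_rpow_neg_atTop (sub_pos.2 hκ)).comp (tendsto_atTop_add_const_left _ 1 tendsto_id)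
  refine squeeze_zero' ?_ ?_ hlim
  · filter_upwards [eventually_ge_atTop 0] with t ht
    positivity
  · filter_upwards [eventually_ge_atTop 0] with t ht
    rw [show -(κ - 1) = 1 + -κ by ring, rpow_add (by positivity), rpow_one]
    gcongr
    linarith

section Growth

variable {F : Type*} [NormedAddCommGroup F] [InnerProductSpace ℝ F] {f : F → ℝ}
  {a₁ a₂ a₃ a₄ c κ : ℝ}

theorem two_mul_sub_le_of_inner_eq_zero (hf : ContDiff ℝ 2 f) (ha₁ : 0 ≤ a₁) (hc : 0 ≤ c)
    (hκ : 0 ≤ κ) (hlow : ∀ ξ, a₁ * ‖ξ‖ - a₂ ≤ f ξ) (hup : ∀ ξ, f ξ ≤ a₃ * ‖ξ‖ + a₄)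
    (hD2 : ∀ ξ η, fderiv ℝ (fun x => fderiv ℝ f x η) ξ η ≤ c * (1 + ‖ξ‖) ^ (-κ) * ‖η‖ ^ 2)
    {p v : F} (hpv : ⟪p, v⟫ = 0) :
    2 * (a₁ * ‖v‖ - a₂) ≤ 2 * (a₃ * ‖p‖ + a₄) + c * (1 + ‖p‖) ^ (-κ) * ‖v‖ ^ 2 := by
  have hvp : ⟪v, p⟫ = 0 := by rwa [real_inner_comm]
  have hsecond := hf.apply_add_add_apply_sub_le (p := p) (v := v)
    (C := c * (1 + ‖p‖) ^ (-κ) * ‖v‖ ^ 2) fun s => by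
      have hp : ‖p‖ ≤ ‖p + s • v‖ :=
        norm_le_norm_add_of_inner_eq_zero (by rw [inner_smul_right, hpv, mul_zero])
      refine (hD2 _ v).trans (mul_le_mul_of_nonneg_right ?_ (sq_nonneg _))
      exact mul_le_mul_of_nonneg_left
        (rpow_le_rpow_of_nonpos (by positivity) (by linarith) (neg_nonpos.2 hκ)) hc
  have hplus : a₁ * ‖v‖ - a₂ ≤ f (p + v) := by
    refine (hlow _).trans' (sub_le_sub_right (mul_le_mul_of_nonneg_left ?_ ha₁) _)
    simpa [add_comm] using norm_le_norm_add_of_inner_eq_zero hvp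
  have hminus : a₁ * ‖v‖ - a₂ ≤ f (p - v) := by
    refine (hlow _).trans' (sub_le_sub_right (mul_le_mul_of_nonneg_left ?_ ha₁) _)
    have := norm_le_norm_add_of_inner_eq_zero (x := -v) (y := p)
      (by rw [inner_neg_left, hvp, neg_zero])
    simpa [norm_neg, neg_add_eq_sub] using this
  linarith [hup p]

theorem le_one_of_growth_of_fderiv_fderiv_le (hf : ContDiff ℝ 2 f) (ha₁ : 0 < a₁)
    (hc : 0 ≤ c) (hlow : ∀ ξ, a₁ * ‖ξ‖ - a₂ ≤ f ξ) (hup : ∀ ξ, f ξ ≤ a₃ * ‖ξ‖ + a₄)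
    (hD2 : ∀ ξ η, fderiv ℝ (fun x => fderiv ℝ f x η) ξ η ≤ c * (1 + ‖ξ‖) ^ (-κ) * ‖η‖ ^ 2)
    {u w : F} (hu : ‖u‖ = 1) (hw : ‖w‖ = 1) (hwu : ⟪w, u⟫ = 0) : κ ≤ 1 := by
  by_contra! hκ
  set R := (a₁ + |a₃|) / a₁
  have hR : 0 ≤ R := by positivity
  have haR : a₁ * R = a₁ + |a₃| := mul_div_cancel₀ _ ha₁.ne'
  obtain ⟨t, ⟨hsmall, hlarge⟩, ht⟩ :=
    (((tendsto_mul_one_add_rpow_neg_atTop hκ).const_mul (c * R ^ 2)).eventually_lt_const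
      (by simpa using ha₁) |>.and (eventually_gt_atTop (2 * (a₂ + a₄) / a₁))
      |>.and (eventually_ge_atTop 0)).exists
  have key := two_mul_sub_le_of_inner_eq_zero hf ha₁.le hc (by linarith) hlow hup hD2
    (p := t • w) (v := (R * t) • u) (by rw [inner_smul_left, inner_smul_right, hwu]; simp)
  rw [norm_smul, norm_smul, hu, hw, norm_of_nonneg ht, norm_of_nonneg (by positivity),
    mul_one, mul_one] at key
  have hlin : a₁ * (R * t) = (a₁ + |a₃|) * t := by rw [← haR, mul_assoc]
  have hquad : c * (1 + t) ^ (-κ) * (R * t) ^ 2 ≤ t * a₁ := by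
    calc _ = t * (c * R ^ 2 * (t * (1 + t) ^ (-κ))) := by ring
      _ ≤ t * a₁ := mul_le_mul_of_nonneg_left hsmall.le ht
  have habs : a₃ * t ≤ |a₃| * t := mul_le_mul_of_nonneg_right (le_abs_self a₃) ht
  rw [div_lt_iff₀' ha₁] at hlarge
  linarith

end Growth

theorem kappa_le_one_general (n : ℕ) (hn : 2 ≤ n)
    (f : EuclideanSpace ℝ (Fin n) → ℝ) (hf : ContDiff ℝ 2 f)
    (a₁ a₂ a₃ a₄ : ℝ) (ha₁ : 0 < a₁)
    (hgrowth : ∀ ξ : EuclideanSpace ℝ (Fin n),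
      a₁ * ‖ξ‖ - a₂ ≤ f ξ ∧ f ξ ≤ a₃ * ‖ξ‖ + a₄)
    (c₁ c₂ μ κ : ℝ) (hc₂ : 0 < c₂)
    (hell : ∀ ξ η : EuclideanSpace ℝ (Fin n),
      c₁ * (1 + ‖ξ‖) ^ (-μ) * ‖η‖ ^ 2 ≤ fderiv ℝ (fun x => fderiv ℝ f x η) ξ η ∧
      fderiv ℝ (fun x => fderiv ℝ f x η) ξ η ≤ c₂ * (1 + ‖ξ‖) ^ (-κ) * ‖η‖ ^ 2) :
    κ ≤ 1 := by
  refine le_one_of_growth_of_fderiv_fderiv_le hf ha₁ hc₂.le (fun ξ => (hgrowth ξ).1)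
    (fun ξ => (hgrowth ξ).2) (fun ξ η => (hell ξ η).2)
    (u := EuclideanSpace.single ⟨0, by omega⟩ 1) (w := EuclideanSpace.single ⟨1, by omega⟩ 1)
    (by simp) (by simp) ?_
  simp [EuclideanSpace.inner_single_left, Fin.ext_iff]

/-- If `f : ℝⁿ → ℝ` (`n ≥ 2`) is `C²`, of linear growth, and satisfies the
`μ`-ellipticity condition with upper exponent `κ ≤ μ`, `μ > 1`, then `κ ≤ 1`. -/
theorem kappa_le_one (n : ℕ) (hn : 2 ≤ n)
    (f : EuclideanSpace ℝ (Fin n) → ℝ) (hf : ContDiff ℝ 2 f)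
    (a₁ a₂ a₃ a₄ : ℝ) (ha₁ : 0 < a₁) (ha₂ : 0 ≤ a₂) (ha₃ : 0 < a₃) (ha₄ : 0 ≤ a₄)
    (hgrowth : ∀ ξ : EuclideanSpace ℝ (Fin n),
      a₁ * ‖ξ‖ - a₂ ≤ f ξ ∧ f ξ ≤ a₃ * ‖ξ‖ + a₄)
    (c₁ c₂ μ κ : ℝ) (hc₁ : 0 < c₁) (hc₂ : 0 < c₂) (hμ : 1 < μ) (hκμ : κ ≤ μ)
    (hell : ∀ ξ η : EuclideanSpace ℝ (Fin n),
      c₁ * (1 + ‖ξ‖) ^ (-μ) * ‖η‖ ^ 2 ≤ fderiv ℝ (fun x => fderiv ℝ f x η) ξ η ∧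
      fderiv ℝ (fun x => fderiv ℝ f x η) ξ η ≤ c₂ * (1 + ‖ξ‖) ^ (-κ) * ‖η‖ ^ 2) :
    κ ≤ 1 :=
  kappa_le_one_general n hn f hf a₁ a₂ a₃ a₄ ha₁ hgrowth c₁ c₂ μ κ hc₂ hell
end

section
/- Let μ₁, μ₂ > 1 and define f : ℝ² → ℝ by f(ξ₁,ξ₂) = Φ_{μ₁}(|ξ₁|) + Φ_{μ₂}(|ξ₂|). Then f is of class C² and, with μ := max{μ₁, μ₂}, there exist constants c₁, c₂ > 0 such that for all ξ, η ∈ ℝ²: c₁(1+|ξ|)^{−μ}|η|² ≤ D²f(ξ)(η,η) ≤ c₂|η|². -/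
open Real MeasureTheory

/-!
`t ↦ Φ_μ(|t|)` is the double primitive `∫₀ᵗ ∫₀ˢ w` of the continuous even weight
`w(r) = (μ-1)(1+|r|)^{-μ}`: the double primitive of an even function is even, and on `[0, ∞)`
the weight agrees with the integrand defining `Φ_μ`. Hence it is `C²` with second derivative `w`.
Since `f` is a sum of functions of one coordinate each, `D²f(ξ)` is diagonal with entries
`(μᵢ-1)(1+|ξᵢ|)^{-μᵢ}`, and `|ξᵢ| ≤ |ξ|` puts these between `(min μᵢ - 1)(1+|ξ|)^{-max μᵢ}` and
`max μᵢ - 1`.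
-/

/-- `Φ_μ(t) = (μ-1) ∫₀ᵗ ∫₀ˢ (1+r)^{-μ} dr ds`. -/
noncomputable def Phi (μ : ℝ) (t : ℝ) : ℝ :=
  (μ - 1) * ∫ s in (0:ℝ)..t, ∫ r in (0:ℝ)..s, (1 + r) ^ (-μ)

/-- The Hessian bilinear form `D²f(ξ)(η,η)` of `f` at `ξ` in direction `η`. -/
noncomputable def hessQ (f : EuclideanSpace ℝ (Fin 2) → ℝ)
    (ξ η : EuclideanSpace ℝ (Fin 2)) : ℝ :=
  fderiv ℝ (fun x => fderiv ℝ f x η) ξ η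

namespace Function

lemma Even.apply_abs {α β : Type*} [AddGroup α] [LinearOrder α] {f : α → β} (hf : f.Even)
    (x : α) : f |x| = f x := by
  rcases abs_choice x with h | h <;> simp [h, hf.eq]

variable {E : Type*} [NormedAddCommGroup E] [NormedSpace ℝ E] {g : ℝ → E}

lemma Even.odd_intervalIntegral (hg : g.Even) : Function.Odd fun x => ∫ r in (0 : ℝ)..x, g r := by
  intro x
  have h := intervalIntegral.integral_comp_neg (a := 0) (b := x) g
  simp only [hg.eq, neg_zero] at h
  show ∫ r in (0 : ℝ)..-x, g r = -∫ r in (0 : ℝ)..x, g r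
  rw [h, intervalIntegral.integral_symm]

lemma Odd.even_intervalIntegral (hg : g.Odd) : Function.Even fun x => ∫ r in (0 : ℝ)..x, g r := by
  intro x
  have h := intervalIntegral.integral_comp_neg (a := 0) (b := x) g
  simp only [hg.eq, neg_zero, intervalIntegral.integral_neg] at h
  show ∫ r in (0 : ℝ)..-x, g r = ∫ r in (0 : ℝ)..x, g r
  rw [intervalIntegral.integral_symm, ← h, neg_neg]

end Function

noncomputable def doublePrimitive (g : ℝ → ℝ) (x : ℝ) : ℝ :=
  ∫ s in (0 : ℝ)..x, ∫ r in (0 : ℝ)..s, g r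

section DoublePrimitive

variable {g h : ℝ → ℝ}

lemma Function.Even.doublePrimitive (hg : g.Even) : (doublePrimitive g).Even :=
  hg.odd_intervalIntegral.even_intervalIntegral

lemma doublePrimitive_congr_of_nonneg (hgh : ∀ r, 0 ≤ r → g r = h r) {x : ℝ} (hx : 0 ≤ x) :
    doublePrimitive g x = doublePrimitive h x := by
  refine intervalIntegral.integral_congr fun s hs => ?_
  rw [Set.uIcc_of_le hx] at hs
  refine intervalIntegral.integral_congr fun r hr => ?_
  rw [Set.uIcc_of_le hs.1] at hr
  exact hgh r hr.1

lemma hasDerivAt_doublePrimitive (hg : Continuous g) (x : ℝ) :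
    HasDerivAt (doublePrimitive g) (∫ r in (0 : ℝ)..x, g r) x :=
  ((intervalIntegral.continuous_primitive (fun a b => hg.intervalIntegrable a b) 0)
    |>.integral_hasStrictDerivAt 0 x).hasDerivAt

end DoublePrimitive

lemma contDiff_two_of_hasDerivAt {φ φ' φ'' : ℝ → ℝ} (h : ∀ x, HasDerivAt φ (φ' x) x)
    (h' : ∀ x, HasDerivAt φ' (φ'' x) x) (hc : Continuous φ'') : ContDiff ℝ 2 φ := by
  have hd : deriv φ = φ' := funext fun x => (h x).deriv
  have hd' : deriv φ' = φ'' := funext fun x => (h' x).deriv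
  rw [show (2 : WithTop ℕ∞) = 1 + 1 from rfl, contDiff_succ_iff_deriv, hd, contDiff_one_iff_deriv,
    hd']
  exact ⟨fun x => (h x).differentiableAt, by simp, fun x => (h' x).differentiableAt, hc⟩

section PhiAbs

variable (μ : ℝ)

lemma continuous_one_add_abs_rpow_neg : Continuous fun r : ℝ => (1 + |r|) ^ (-μ) :=
  (continuous_const.add continuous_abs).rpow_const fun r =>
    Or.inl (by positivity : (0 : ℝ) < 1 + |r|).ne'

lemma Phi_abs :
    (fun t => Phi μ |t|) = fun t => (μ - 1) * doublePrimitive (fun r => (1 + |r|) ^ (-μ)) t := by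
  have heven : Function.Even fun r : ℝ => (1 + |r|) ^ (-μ) := fun r => by simp only [abs_neg]
  funext x
  rw [← heven.doublePrimitive.apply_abs x]
  exact congrArg _ <| doublePrimitive_congr_of_nonneg (fun r hr => by rw [abs_of_nonneg hr])
    (abs_nonneg x)

lemma hasDerivAt_Phi_abs (x : ℝ) :
    HasDerivAt (fun t => Phi μ |t|) ((μ - 1) * ∫ r in (0 : ℝ)..x, (1 + |r|) ^ (-μ)) x := by
  rw [Phi_abs]
  exact (hasDerivAt_doublePrimitive (continuous_one_add_abs_rpow_neg μ) x).const_mul _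

lemma hasDerivAt_deriv_Phi_abs (x : ℝ) :
    HasDerivAt (fun t => (μ - 1) * ∫ r in (0 : ℝ)..t, (1 + |r|) ^ (-μ))
      ((μ - 1) * (1 + |x|) ^ (-μ)) x :=
  ((continuous_one_add_abs_rpow_neg μ).integral_hasStrictDerivAt 0 x).hasDerivAt.const_mul _

lemma contDiff_Phi_abs : ContDiff ℝ 2 fun t => Phi μ |t| :=
  contDiff_two_of_hasDerivAt (hasDerivAt_Phi_abs μ) (hasDerivAt_deriv_Phi_abs μ)
    (continuous_const.mul (continuous_one_add_abs_rpow_neg μ))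

end PhiAbs
section Separable

variable {φ₀ φ₀' φ₀'' φ₁ φ₁' φ₁'' : ℝ → ℝ}

lemma hasFDerivAt_add_coord {ι : Type*} [Fintype ι] (i j : ι) {x : EuclideanSpace ℝ ι}
    (h₀ : HasDerivAt φ₀ (φ₀' (x i)) (x i)) (h₁ : HasDerivAt φ₁ (φ₁' (x j)) (x j)) :
    HasFDerivAt (fun y : EuclideanSpace ℝ ι => φ₀ (y i) + φ₁ (y j))
      (φ₀' (x i) • EuclideanSpace.proj (𝕜 := ℝ) i + φ₁' (x j) • EuclideanSpace.proj (𝕜 := ℝ) j) x :=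
  (h₀.comp_hasFDerivAt x (EuclideanSpace.proj (𝕜 := ℝ) i).hasFDerivAt).add
    (h₁.comp_hasFDerivAt x (EuclideanSpace.proj (𝕜 := ℝ) j).hasFDerivAt)

lemma fderiv_add_coord_apply {ι : Type*} [Fintype ι] (i j : ι) {x : EuclideanSpace ℝ ι}
    (h₀ : HasDerivAt φ₀ (φ₀' (x i)) (x i)) (h₁ : HasDerivAt φ₁ (φ₁' (x j)) (x j))
    (η : EuclideanSpace ℝ ι) :
    fderiv ℝ (fun y : EuclideanSpace ℝ ι => φ₀ (y i) + φ₁ (y j)) x η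
      = φ₀' (x i) * η i + φ₁' (x j) * η j := by
  rw [(hasFDerivAt_add_coord i j h₀ h₁).fderiv]
  rfl

lemma contDiff_add_coord {ι : Type*} [Fintype ι] (i j : ι) {n : WithTop ℕ∞}
    (h₀ : ContDiff ℝ n φ₀) (h₁ : ContDiff ℝ n φ₁) :
    ContDiff ℝ n fun y : EuclideanSpace ℝ ι => φ₀ (y i) + φ₁ (y j) :=
  (h₀.comp (EuclideanSpace.proj (𝕜 := ℝ) i).contDiff).add
    (h₁.comp (EuclideanSpace.proj (𝕜 := ℝ) j).contDiff)

lemma hessQ_add_coord (h₀ : ∀ x, HasDerivAt φ₀ (φ₀' x) x) (h₀' : ∀ x, HasDerivAt φ₀' (φ₀'' x) x)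
    (h₁ : ∀ x, HasDerivAt φ₁ (φ₁' x) x) (h₁' : ∀ x, HasDerivAt φ₁' (φ₁'' x) x)
    (ξ η : EuclideanSpace ℝ (Fin 2)) :
    hessQ (fun x => φ₀ (x 0) + φ₁ (x 1)) ξ η = φ₀'' (ξ 0) * η 0 ^ 2 + φ₁'' (ξ 1) * η 1 ^ 2 := by
  have hfirst : (fun x => fderiv ℝ (fun y => φ₀ (y 0) + φ₁ (y 1)) x η)
      = fun x : EuclideanSpace ℝ (Fin 2) => φ₀' (x 0) * η 0 + φ₁' (x 1) * η 1 :=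
    funext fun x => fderiv_add_coord_apply 0 1 (h₀ _) (h₁ _) η
  rw [hessQ, hfirst, fderiv_add_coord_apply (φ₀' := fun t => φ₀'' t * η 0)
    (φ₁' := fun t => φ₁'' t * η 1) 0 1 ((h₀' _).mul_const _) ((h₁' _).mul_const _)]
  ring

end Separable

section Ellipticity

lemma mul_norm_sq_le_sum_mul_sq {ι : Type*} [Fintype ι] {a : ι → ℝ} {m : ℝ} (h : ∀ i, m ≤ a i)
    (η : EuclideanSpace ℝ ι) : m * ‖η‖ ^ 2 ≤ ∑ i, a i * η i ^ 2 := by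
  rw [EuclideanSpace.real_norm_sq_eq, Finset.mul_sum]
  exact Finset.sum_le_sum fun i _ => mul_le_mul_of_nonneg_right (h i) (sq_nonneg _)

lemma sum_mul_sq_le_mul_norm_sq {ι : Type*} [Fintype ι] {a : ι → ℝ} {M : ℝ} (h : ∀ i, a i ≤ M)
    (η : EuclideanSpace ℝ ι) : ∑ i, a i * η i ^ 2 ≤ M * ‖η‖ ^ 2 := by
  rw [EuclideanSpace.real_norm_sq_eq, Finset.mul_sum]
  exact Finset.sum_le_sum fun i _ => mul_le_mul_of_nonneg_right (h i) (sq_nonneg _)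

variable {μ m M t R : ℝ}

lemma one_add_rpow_neg_le_one_add_abs_rpow_neg (hμ : 0 ≤ μ) (hμM : μ ≤ M) (ht : |t| ≤ R) :
    (1 + R) ^ (-M) ≤ (1 + |t|) ^ (-μ) := by
  have hR : 1 ≤ 1 + R := by linarith [abs_nonneg t]
  calc (1 + R) ^ (-M) ≤ (1 + R) ^ (-μ) := Real.rpow_le_rpow_of_exponent_le hR (by linarith)
    _ ≤ (1 + |t|) ^ (-μ) :=
      Real.rpow_le_rpow_of_nonpos (by positivity) (by linarith) (by linarith)

lemma sub_one_mul_one_add_rpow_neg_le (hm : 1 ≤ m) (hmμ : m ≤ μ) (hμM : μ ≤ M) (ht : |t| ≤ R) :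
    (m - 1) * (1 + R) ^ (-M) ≤ (μ - 1) * (1 + |t|) ^ (-μ) :=
  mul_le_mul (by linarith) (one_add_rpow_neg_le_one_add_abs_rpow_neg (by linarith) hμM ht)
    (Real.rpow_nonneg (by linarith [abs_nonneg t]) _) (by linarith)

lemma sub_one_mul_one_add_abs_rpow_neg_le (hμ : 1 ≤ μ) (hμM : μ ≤ M) :
    (μ - 1) * (1 + |t|) ^ (-μ) ≤ M - 1 :=
  calc (μ - 1) * (1 + |t|) ^ (-μ) ≤ (μ - 1) * 1 :=
        mul_le_mul_of_nonneg_left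
          (Real.rpow_le_one_of_one_le_of_nonpos (by linarith [abs_nonneg t]) (by linarith))
          (by linarith)
    _ ≤ M - 1 := by linarith

end Ellipticity

/-- the splitting density `f(ξ₁,ξ₂) = Φ_{μ₁}(|ξ₁|) + Φ_{μ₂}(|ξ₂|)` is `C²` and
satisfies `c₁(1+|ξ|)^{-μ}|η|² ≤ D²f(ξ)(η,η) ≤ c₂|η|²` with `μ = max{μ₁,μ₂}`. -/
theorem splitting_Phi_elliptic (μ₁ μ₂ : ℝ) (hμ₁ : 1 < μ₁) (hμ₂ : 1 < μ₂)
    (f : EuclideanSpace ℝ (Fin 2) → ℝ)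
    (hf : f = fun ξ => Phi μ₁ |ξ 0| + Phi μ₂ |ξ 1|) :
    ContDiff ℝ 2 f ∧
    ∃ c₁ c₂ : ℝ, 0 < c₁ ∧ 0 < c₂ ∧
      ∀ ξ η : EuclideanSpace ℝ (Fin 2),
        c₁ * (1 + ‖ξ‖) ^ (-(max μ₁ μ₂)) * ‖η‖ ^ 2 ≤ hessQ f ξ η ∧
        hessQ f ξ η ≤ c₂ * ‖η‖ ^ 2 := by
  subst hf
  refine ⟨contDiff_add_coord 0 1 (contDiff_Phi_abs μ₁) (contDiff_Phi_abs μ₂),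
    min μ₁ μ₂ - 1, max μ₁ μ₂ - 1, sub_pos.2 (lt_min hμ₁ hμ₂),
    sub_pos.2 (hμ₁.trans_le (le_max_left _ _)), fun ξ η => ?_⟩
  have hξ (i : Fin 2) : |ξ i| ≤ ‖ξ‖ := (Real.norm_eq_abs _).symm.trans_le (PiLp.norm_apply_le ξ i)
  have hhess : hessQ (fun ξ => Phi μ₁ |ξ 0| + Phi μ₂ |ξ 1|) ξ η
      = ∑ i, ![(μ₁ - 1) * (1 + |ξ 0|) ^ (-μ₁), (μ₂ - 1) * (1 + |ξ 1|) ^ (-μ₂)] i * η i ^ 2 := by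
    rw [hessQ_add_coord (hasDerivAt_Phi_abs μ₁) (hasDerivAt_deriv_Phi_abs μ₁)
      (hasDerivAt_Phi_abs μ₂) (hasDerivAt_deriv_Phi_abs μ₂), Fin.sum_univ_two,
      Matrix.cons_val_zero, Matrix.cons_val_one, Matrix.cons_val_fin_one]
  rw [hhess]
  refine ⟨mul_norm_sq_le_sum_mul_sq (Fin.forall_fin_two.2 ⟨?_, ?_⟩) η,
    sum_mul_sq_le_mul_norm_sq (Fin.forall_fin_two.2 ⟨?_, ?_⟩) η⟩
  · exact sub_one_mul_one_add_rpow_neg_le (le_min hμ₁.le hμ₂.le) (min_le_left _ _)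
      (le_max_left _ _) (hξ 0)
  · exact sub_one_mul_one_add_rpow_neg_le (le_min hμ₁.le hμ₂.le) (min_le_right _ _)
      (le_max_right _ _) (hξ 1)
  · exact sub_one_mul_one_add_abs_rpow_neg_le hμ₁.le (le_max_left _ _)
  · exact sub_one_mul_one_add_abs_rpow_neg_le hμ₂.le (le_max_right _ _)
end

section
/- Let μ₁, μ₂ > 1 and define f : ℝ² → ℝ by f(ξ₁,ξ₂) = Φ_{μ₁}(|ξ₁|) + Φ_{μ₂}(|ξ₂|). Then the upper bound in the ellipticity estimate cannot be improved to any decaying power: for every κ > 0 and every constant c₂ > 0, there exist ξ, η ∈ ℝ² with η ≠ 0 such that D²f(ξ)(η,η) > c₂(1+|ξ|)^{−κ}|η|². -/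
open Real MeasureTheory

/-!
Along `ξ = (t, 1)` the second derivative of `f` in the direction `e₂` only sees the second summand
and equals `Φ_{μ₂}''(1) = (μ₂ - 1) 2^{-μ₂} > 0` for every `t > 0`, whereas
`c₂ (1 + |ξ|)^{-κ} → 0` as `t → ∞`.
-/

open Filter Topology Set

theorem hasDerivAt_integral_of_continuousOn_Ioi {g : ℝ → ℝ} {a t : ℝ}
    (hg : ContinuousOn g (Ioi a)) (ha : a < 0) (ht : a < t) :
    HasDerivAt (fun u => ∫ r in (0:ℝ)..u, g r) (g t) t := by
  have hsub : uIcc 0 t ⊆ Ioi a := fun _ hr => (lt_min ha ht).trans_le hr.1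
  exact intervalIntegral.integral_hasDerivAt_right ((hg.mono hsub).intervalIntegrable)
    (hg.stronglyMeasurableAtFilter isOpen_Ioi t ht) (hg.continuousAt (Ioi_mem_nhds ht))

theorem continuousOn_one_add_rpow_const (p : ℝ) :
    ContinuousOn (fun r : ℝ => (1 + r) ^ p) (Ioi (-1)) := fun r hr =>
  ((continuous_const.add continuous_id).continuousAt.rpow_const
    (Or.inl (by rw [mem_Ioi] at hr; linarith : 0 < 1 + r).ne')).continuousWithinAt

theorem hasDerivAt_integral_one_add_rpow (p : ℝ) {t : ℝ} (ht : -1 < t) :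
    HasDerivAt (fun u => ∫ r in (0:ℝ)..u, (1 + r) ^ p) ((1 + t) ^ p) t :=
  hasDerivAt_integral_of_continuousOn_Ioi (continuousOn_one_add_rpow_const p) (by norm_num) ht

theorem hasDerivAt_Phi (μ : ℝ) {t : ℝ} (ht : -1 < t) :
    HasDerivAt (Phi μ) ((μ - 1) * ∫ r in (0:ℝ)..t, (1 + r) ^ (-μ)) t := by
  have hcont : ContinuousOn (fun u => ∫ r in (0:ℝ)..u, (1 + r) ^ (-μ)) (Ioi (-1)) := fun u hu =>
    (hasDerivAt_integral_one_add_rpow (-μ) hu).continuousAt.continuousWithinAt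
  exact (hasDerivAt_integral_of_continuousOn_Ioi hcont (by norm_num) ht).const_mul (μ - 1)

theorem hasFDerivAt_comp_apply {ι : Type*} [Fintype ι] {g : ℝ → ℝ} {g' : ℝ}
    {x : EuclideanSpace ℝ ι} (i : ι) (hg : HasDerivAt g g' (x i)) :
    HasFDerivAt (fun y : EuclideanSpace ℝ ι => g (y i)) (g' • EuclideanSpace.proj (𝕜 := ℝ) i) x :=
  hg.comp_hasFDerivAt x (EuclideanSpace.proj (𝕜 := ℝ) i).hasFDerivAt

theorem hessQ_single_one_of_eventuallyEq {f : EuclideanSpace ℝ (Fin 2) → ℝ} {g₀ g₁ g₁' : ℝ → ℝ}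
    {ξ : EuclideanSpace ℝ (Fin 2)} {a : ℝ}
    (hf : f =ᶠ[𝓝 ξ] fun y => g₀ (y 0) + g₁ (y 1))
    (hg₀ : ∀ᶠ t in 𝓝 (ξ 0), DifferentiableAt ℝ g₀ t)
    (hg₁ : ∀ᶠ t in 𝓝 (ξ 1), HasDerivAt g₁ (g₁' t) t) (hg₁' : HasDerivAt g₁' a (ξ 1)) :
    hessQ f ξ (EuclideanSpace.single 1 1) = a := by
  have hpartial : (fun x => fderiv ℝ f x (EuclideanSpace.single 1 1)) =ᶠ[𝓝 ξ]
      fun x => g₁' (x 1) := by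
    filter_upwards [hf.eventuallyEq_nhds,
      (EuclideanSpace.proj (𝕜 := ℝ) (0 : Fin 2)).continuous.continuousAt.eventually hg₀,
      (EuclideanSpace.proj (𝕜 := ℝ) (1 : Fin 2)).continuous.continuousAt.eventually hg₁]
      with x hfx hg₀x hg₁x
    have := ((hasFDerivAt_comp_apply 0 hg₀x.hasDerivAt).add
      (hasFDerivAt_comp_apply 1 hg₁x)).congr_of_eventuallyEq hfx
    simp [this.fderiv]
  rw [hessQ, hpartial.fderiv_eq, (hasFDerivAt_comp_apply 1 hg₁').fderiv]
  simp

theorem hessQ_Phi_splitting_single_one (μ₁ μ₂ : ℝ) {ξ : EuclideanSpace ℝ (Fin 2)}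
    (h0 : 0 < ξ 0) (h1 : 0 < ξ 1) :
    hessQ (fun ξ => Phi μ₁ |ξ 0| + Phi μ₂ |ξ 1|) ξ (EuclideanSpace.single 1 1) =
      (μ₂ - 1) * (1 + ξ 1) ^ (-μ₂) := by
  have hpos : ∀ i, 0 < ξ i → ∀ᶠ y : EuclideanSpace ℝ (Fin 2) in 𝓝 ξ, 0 < y i := fun i hi =>
    (EuclideanSpace.proj (𝕜 := ℝ) i).continuous.continuousAt.eventually (eventually_gt_nhds hi)
  refine hessQ_single_one_of_eventuallyEq (g₀ := Phi μ₁) (g₁ := Phi μ₂) ?_ ?_ ?_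
    ((hasDerivAt_integral_one_add_rpow (-μ₂) (by linarith)).const_mul (μ₂ - 1))
  · filter_upwards [hpos 0 h0, hpos 1 h1] with y hy0 hy1
    rw [abs_of_pos hy0, abs_of_pos hy1]
  · filter_upwards [eventually_gt_nhds (by linarith : -1 < ξ 0)] with t ht
    exact (hasDerivAt_Phi μ₁ ht).differentiableAt
  · filter_upwards [eventually_gt_nhds (by linarith : -1 < ξ 1)] with t ht
    exact hasDerivAt_Phi μ₂ ht

theorem tendsto_norm_toLp_atTop :
    Tendsto (fun t : ℝ => ‖!₂[t, (1 : ℝ)]‖) atTop atTop :=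
  tendsto_atTop_mono
    (fun t => (le_abs_self t).trans (by simpa using PiLp.norm_apply_le !₂[t, (1 : ℝ)] 0)) tendsto_id

theorem splitting_Phi_upper_bound_sharp_general (μ₁ μ₂ : ℝ) (hμ₂ : 1 < μ₂)
    (f : EuclideanSpace ℝ (Fin 2) → ℝ)
    (hf : f = fun ξ => Phi μ₁ |ξ 0| + Phi μ₂ |ξ 1|)
    (κ : ℝ) (hκ : 0 < κ) (c₂ : ℝ) :
    ∃ ξ η : EuclideanSpace ℝ (Fin 2), η ≠ 0 ∧
      c₂ * (1 + ‖ξ‖) ^ (-κ) * ‖η‖ ^ 2 < hessQ f ξ η := by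
  subst hf
  have hε : 0 < (μ₂ - 1) * (1 + 1 : ℝ) ^ (-μ₂) := by have := sub_pos.2 hμ₂; positivity
  have hdecay : Tendsto (fun t : ℝ => c₂ * (1 + ‖!₂[t, (1 : ℝ)]‖) ^ (-κ)) atTop (𝓝 0) := by
    simpa using ((tendsto_rpow_neg_atTop hκ).comp
      (tendsto_atTop_add_const_left _ 1 tendsto_norm_toLp_atTop)).const_mul c₂
  obtain ⟨t, ht, htpos⟩ := ((hdecay.eventually (gt_mem_nhds hε)).and (eventually_gt_atTop 0)).exists
  refine ⟨!₂[t, 1], EuclideanSpace.single 1 1, by simp, ?_⟩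
  rw [hessQ_Phi_splitting_single_one μ₁ μ₂ (by simpa) (by simp)]
  simpa using ht

/-- for the splitting density `f(ξ₁,ξ₂) = Φ_{μ₁}(|ξ₁|) + Φ_{μ₂}(|ξ₂|)`, the upper
ellipticity bound cannot be improved to any decaying power: for every `κ > 0`, `c₂ > 0` there
are `ξ, η` with `η ≠ 0` and `D²f(ξ)(η,η) > c₂(1+|ξ|)^{-κ}|η|²`. -/
theorem splitting_Phi_upper_bound_sharp (μ₁ μ₂ : ℝ) (hμ₁ : 1 < μ₁) (hμ₂ : 1 < μ₂)
    (f : EuclideanSpace ℝ (Fin 2) → ℝ)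
    (hf : f = fun ξ => Phi μ₁ |ξ 0| + Phi μ₂ |ξ 1|)
    (κ : ℝ) (hκ : 0 < κ) (c₂ : ℝ) (hc₂ : 0 < c₂) :
    ∃ ξ η : EuclideanSpace ℝ (Fin 2), η ≠ 0 ∧
      c₂ * (1 + ‖ξ‖) ^ (-κ) * ‖η‖ ^ 2 < hessQ f ξ η :=
  splitting_Phi_upper_bound_sharp_general μ₁ μ₂ hμ₂ f hf κ hκ c₂
end

section
/- (Caccioppoli-type inequality.) In the splitting setting described below, for every integer l ≥ 1 and every α ≥ 0 there exists a constant c = c(α, l) > 0, independent of δ, u, and η, such that for every η ∈ C_c^∞(Ω) with 0 ≤ η ≤ 1: ∫_Ω D²f_δ(∇u)(∇∂₁u, ∇∂₁u) η^{2l} Γ₁^{α} dx ≤ c ∫_Ω D²f_δ(∇u)(∇η, ∇η) η^{2l−2} Γ₁^{α+1} dx. -/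
open Real MeasureTheory

/-- Partial derivative of `v : ℝ² → ℝ` in the `i`-th coordinate direction. -/
noncomputable def pd (i : Fin 2) (v : EuclideanSpace ℝ (Fin 2) → ℝ)
    (x : EuclideanSpace ℝ (Fin 2)) : ℝ :=
  fderiv ℝ v x (EuclideanSpace.single i 1)

/-!
Testing the Euler equation `∂₁(∂₁f_δ(∇u)) + ∂₂(∂₂f_δ(∇u)) = 0` with `∂₁φ` and exchanging `∂₁` and
`∂₂` in the second term by two integrations by parts gives `∫ D²f_δ(∇u)(∇∂₁u, ∇φ) = 0` for every
`φ ∈ C²_c(Ω)`. Take `φ = η^{2l} g(∂₁u)` with `g(t) = (1 + t²)^α t`, so that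
`∇φ = η^{2l} g'(∂₁u) ∇∂₁u + 2l η^{2l-1} g(∂₁u) ∇η` with `g'(t) ≥ (1 + t²)^α`. The first part of
`∇φ` dominates the left-hand side of the claim; Young's inequality bounds the cross term coming from
the second part by half of the left-hand side plus `2l²` times the right-hand side integrand, and
absorbing gives `c = 4l²`.
-/

local notation "ℝ²" => EuclideanSpace ℝ (Fin 2)

section PartialDerivatives

variable {f g : ℝ² → ℝ} {x : ℝ²} {m n : WithTop ℕ∞}

theorem ContDiff.contDiff_pd (hf : ContDiff ℝ n f) (hmn : m + 1 ≤ n) (i : Fin 2) :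
    ContDiff ℝ m (pd i f) :=
  (ContinuousLinearMap.apply ℝ ℝ (EuclideanSpace.single i (1 : ℝ))).contDiff.comp
    (hf.fderiv_right hmn)

theorem ContDiff.continuous_pd (hf : ContDiff ℝ n f) (hn : 1 ≤ n) (i : Fin 2) :
    Continuous (pd i f) :=
  (hf.contDiff_pd (m := 0) (by simpa using hn) i).continuous

theorem pd_eq_zero_of_notMem_tsupport (h : x ∉ tsupport f) (i : Fin 2) : pd i f x = 0 := by
  simp [pd, fderiv_of_notMem_tsupport ℝ h]

theorem HasCompactSupport.hasCompactSupport_pd (hf : HasCompactSupport f) (i : Fin 2) :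
    HasCompactSupport (pd i f) :=
  hf.fderiv_apply ℝ _

theorem pd_comm (hf : ContDiff ℝ 2 f) (i j : Fin 2) (x : ℝ²) :
    pd i (pd j f) x = pd j (pd i f) x := by
  have hdiff : DifferentiableAt ℝ (fderiv ℝ f) x :=
    (hf.fderiv_right le_rfl).differentiable one_ne_zero x
  have h2 : ∀ k m : Fin 2, pd k (pd m f) x =
      fderiv ℝ (fderiv ℝ f) x (EuclideanSpace.single k 1) (EuclideanSpace.single m 1) := by
    intro k m
    change fderiv ℝ (fun y => fderiv ℝ f y (EuclideanSpace.single m 1)) x _ = _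
    simp [fderiv_clm_apply hdiff (differentiableAt_const _)]
  rw [h2, h2, hf.contDiffAt.isSymmSndFDerivAt (by simp)]

theorem pd_mul (hf : DifferentiableAt ℝ f x) (hg : DifferentiableAt ℝ g x) (i : Fin 2) :
    pd i (fun y => f y * g y) x = f x * pd i g x + g x * pd i f x := by
  simp [pd, fderiv_fun_mul hf hg]

theorem pd_comp {h : ℝ → ℝ} {h' : ℝ} (hh : HasDerivAt h h' (f x)) (hf : DifferentiableAt ℝ f x)
    (i : Fin 2) : pd i (fun y => h (f y)) x = h' * pd i f x := by
  change fderiv ℝ (h ∘ f) x _ = _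
  simp [pd, (hh.comp_hasFDerivAt x hf.hasFDerivAt).fderiv]

end PartialDerivatives

theorem Continuous.integrable_mul_pd {g ψ : ℝ² → ℝ} (hg : Continuous g) (hψ : ContDiff ℝ 1 ψ)
    (hψc : HasCompactSupport ψ) (i : Fin 2) : Integrable fun x => g x * pd i ψ x :=
  (hg.mul (hψ.continuous_pd le_rfl i)).integrable_of_hasCompactSupport
    (hψc.hasCompactSupport_pd i).mul_left

theorem integral_pd_mul_pd_comm {Q φ : ℝ² → ℝ} (hQ : ContDiff ℝ 1 Q) (hφ : ContDiff ℝ 2 φ)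
    (hφc : HasCompactSupport φ) (i j : Fin 2) :
    ∫ x, pd j Q x * pd i φ x = ∫ x, pd i Q x * pd j φ x := by
  have hφ1 : ContDiff ℝ 1 φ := hφ.of_le (by norm_num)
  have ibp : ∀ k l : Fin 2, ∫ x, Q x * pd l (pd k φ) x = -∫ x, pd l Q x * pd k φ x := fun k l =>
    integral_mul_fderiv_eq_neg_fderiv_mul_of_integrable
      ((hQ.continuous_pd le_rfl l).integrable_mul_pd hφ1 hφc k)
      (hQ.continuous.integrable_mul_pd (hφ.contDiff_pd le_rfl k) (hφc.hasCompactSupport_pd k) l)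
      (hQ.continuous.integrable_mul_pd hφ1 hφc k)
      (fun x _ => hQ.differentiable one_ne_zero x)
      (fun x _ => (hφ.contDiff_pd le_rfl k).differentiable one_ne_zero x)
  have hji := ibp j i
  simp_rw [pd_comm hφ i j] at hji
  linarith [ibp i j]

theorem integral_pd_mul_pd_add_eq_zero_of_div_eq_zero {Ω : Set ℝ²} {P Q φ : ℝ² → ℝ}
    (hP : ContDiff ℝ 1 P) (hQ : ContDiff ℝ 1 Q) (hdiv : ∀ x ∈ Ω, pd 0 P x + pd 1 Q x = 0)
    (hφ : ContDiff ℝ 2 φ) (hφc : HasCompactSupport φ) (hφΩ : tsupport φ ⊆ Ω) :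
    ∫ x, (pd 0 P x * pd 0 φ x + pd 0 Q x * pd 1 φ x) = 0 := by
  have hφ1 : ContDiff ℝ 1 φ := hφ.of_le (by norm_num)
  have hvanish : ∀ x, (pd 0 P x + pd 1 Q x) * pd 0 φ x = 0 := fun x => by
    by_cases hx : x ∈ Ω
    · rw [hdiv x hx, zero_mul]
    · rw [pd_eq_zero_of_notMem_tsupport (fun h => hx (hφΩ h)), mul_zero]
  calc ∫ x, (pd 0 P x * pd 0 φ x + pd 0 Q x * pd 1 φ x)
      = (∫ x, pd 0 P x * pd 0 φ x) + ∫ x, pd 1 Q x * pd 0 φ x := by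
        rw [integral_add ((hP.continuous_pd le_rfl 0).integrable_mul_pd hφ1 hφc 0)
          ((hQ.continuous_pd le_rfl 0).integrable_mul_pd hφ1 hφc 1),
          integral_pd_mul_pd_comm hQ hφ hφc 0 1]
    _ = ∫ x, (pd 0 P x + pd 1 Q x) * pd 0 φ x := by
        rw [← integral_add ((hP.continuous_pd le_rfl 0).integrable_mul_pd hφ1 hφc 0)
          ((hQ.continuous_pd le_rfl 1).integrable_mul_pd hφ1 hφc 0)]
        simp only [add_mul]
    _ = 0 := by simp [hvanish]

theorem integral_hess_pd_zero_eq_zero {Ω : Set ℝ²} {f₁ f₂ : ℝ → ℝ} (hf₁ : ContDiff ℝ 2 f₁)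
    (hf₂ : ContDiff ℝ 2 f₂) (δ : ℝ) {u : ℝ² → ℝ} (hu : ContDiff ℝ 2 u)
    (hEuler : ∀ x ∈ Ω, δ * (pd 0 (pd 0 u) x + pd 1 (pd 1 u) x)
      + deriv (deriv f₁) (pd 0 u x) * pd 0 (pd 0 u) x
      + deriv (deriv f₂) (pd 1 u x) * pd 1 (pd 1 u) x = 0)
    {φ : ℝ² → ℝ} (hφ : ContDiff ℝ 2 φ) (hφc : HasCompactSupport φ) (hφΩ : tsupport φ ⊆ Ω) :
    ∫ x, (δ * (pd 0 (pd 0 u) x * pd 0 φ x + pd 1 (pd 0 u) x * pd 1 φ x)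
      + deriv (deriv f₁) (pd 0 u x) * pd 0 (pd 0 u) x * pd 0 φ x
      + deriv (deriv f₂) (pd 1 u x) * pd 1 (pd 0 u) x * pd 1 φ x) = 0 := by
  -- the fluxes `∂ᵢf_δ(∇u) = δ ∂ᵢu + fᵢ'(∂ᵢu)`, whose divergence is the Euler equation
  have hflux : ∀ {f : ℝ → ℝ}, ContDiff ℝ 2 f → ContDiff ℝ 1 fun t => δ * t + deriv f t :=
    fun hf => (contDiff_const.mul contDiff_id).add hf.deriv'
  have hflux' : ∀ {f : ℝ → ℝ}, ContDiff ℝ 2 f → ∀ t,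
      HasDerivAt (fun s => δ * s + deriv f s) (δ + deriv (deriv f) t) t := fun hf t => by
    simpa using ((hasDerivAt_id t).const_mul δ).fun_add
      (hf.deriv'.differentiable one_ne_zero t).hasDerivAt
  have hpd_flux : ∀ {f : ℝ → ℝ}, ContDiff ℝ 2 f → ∀ (i j : Fin 2) x,
      pd i (fun y => δ * pd j u y + deriv f (pd j u y)) x
        = (δ + deriv (deriv f) (pd j u x)) * pd i (pd j u) x := fun hf i j x =>
    pd_comp (hflux' hf _) ((hu.contDiff_pd le_rfl j).differentiable one_ne_zero x) i
  have h := integral_pd_mul_pd_add_eq_zero_of_div_eq_zero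
    ((hflux hf₁).comp (hu.contDiff_pd le_rfl 0)) ((hflux hf₂).comp (hu.contDiff_pd le_rfl 1))
    (fun x hx => by
      simp only [Function.comp_def, hpd_flux hf₁, hpd_flux hf₂]
      linear_combination hEuler x hx) hφ hφc hφΩ
  simp only [Function.comp_def, hpd_flux hf₁, hpd_flux hf₂, pd_comm hu 0 1] at h
  rw [← h]
  congr 1 with x
  ring

noncomputable def caccioppoliWeight (α t : ℝ) : ℝ := (1 + t ^ 2) ^ α * t

theorem hasDerivAt_caccioppoliWeight (α t : ℝ) :
    HasDerivAt (caccioppoliWeight α)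
      ((1 + t ^ 2) ^ α + 2 * α * (1 + t ^ 2) ^ (α - 1) * t ^ 2) t := by
  have hbase : HasDerivAt (fun s => 1 + s ^ 2) (2 * t) t := by
    simpa using ((hasDerivAt_pow 2 t).const_add 1)
  exact ((hbase.rpow_const (p := α) (Or.inl (by positivity))).fun_mul
    (hasDerivAt_id' t)).congr_deriv (by ring)

theorem contDiff_caccioppoliWeight {n : WithTop ℕ∞} (α : ℝ) : ContDiff ℝ n (caccioppoliWeight α) :=
  ((contDiff_const.add (contDiff_id.pow 2)).rpow_const_of_ne fun t => by positivity).mul contDiff_id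

theorem one_add_sq_rpow_le_deriv_caccioppoliWeight {α : ℝ} (hα : 0 ≤ α) (t : ℝ) :
    (1 + t ^ 2) ^ α ≤ deriv (caccioppoliWeight α) t := by
  rw [(hasDerivAt_caccioppoliWeight α t).deriv]
  have : 0 ≤ (1 + t ^ 2) ^ (α - 1) := by positivity
  nlinarith [sq_nonneg t, mul_nonneg (mul_nonneg hα this) (sq_nonneg t)]

/-- The test function `η^{2l} Γ₁^α ∂₁u` of the paper, with `w = ∂₁u`. -/
noncomputable def caccioppoliTest (l : ℕ) (α : ℝ) (η w : ℝ² → ℝ) (x : ℝ²) : ℝ :=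
  η x ^ (2 * l) * caccioppoliWeight α (w x)

section TestFunction

variable {l : ℕ} {α : ℝ} {η w : ℝ² → ℝ}

theorem ContDiff.caccioppoliTest {n : WithTop ℕ∞} (hη : ContDiff ℝ n η) (hw : ContDiff ℝ n w) :
    ContDiff ℝ n (caccioppoliTest l α η w) :=
  (hη.pow _).mul ((contDiff_caccioppoliWeight α).comp hw)

theorem support_caccioppoliTest_subset (hl : l ≠ 0) :
    Function.support (caccioppoliTest l α η w) ⊆ Function.support η :=
  Function.support_subset_iff'.mpr fun x hx => by
    simp [caccioppoliTest, Function.notMem_support.mp hx, hl]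

theorem pd_caccioppoliTest {x : ℝ²} (hη : DifferentiableAt ℝ η x) (hw : DifferentiableAt ℝ w x)
    (i : Fin 2) :
    pd i (caccioppoliTest l α η w) x
      = η x ^ (2 * l) * deriv (caccioppoliWeight α) (w x) * pd i w x
        + 2 * l * η x ^ (2 * l - 1) * caccioppoliWeight α (w x) * pd i η x := by
  have hg := hasDerivAt_caccioppoliWeight α (w x)
  unfold caccioppoliTest
  rw [pd_mul (f := fun y => η y ^ (2 * l)) (g := fun y => caccioppoliWeight α (w y))
    (hη.pow _) (hg.differentiableAt.comp x hw), pd_comp hg hw,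
    pd_comp (hasDerivAt_pow _ _) hη, hg.deriv]
  push_cast
  ring

end TestFunction

theorem half_energy_sub_le_mul_test {b γ γ' Γ e t p q : ℝ} {l : ℕ} (hb : 0 ≤ b) (hγ : 0 ≤ γ)
    (hγγ' : γ ≤ γ') (ht : t ^ 2 ≤ Γ) :
    b * p ^ 2 * e ^ (2 * l) * γ / 2 - 2 * l ^ 2 * (b * q ^ 2 * e ^ (2 * l - 2) * (γ * Γ))
      ≤ b * p * (e ^ (2 * l) * γ' * p + 2 * l * e ^ (2 * l - 1) * (γ * t) * q) := by
  have h2l : e ^ (2 * l) = (e ^ l) ^ 2 := by rw [← pow_mul, mul_comm]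
  have h2l1 : e ^ (2 * l - 1) = e ^ l * e ^ (l - 1) := by rw [← pow_add]; congr 1; omega
  have h2l2 : e ^ (2 * l - 2) = (e ^ (l - 1)) ^ 2 := by rw [← pow_mul]; congr 1; omega
  rw [h2l, h2l1, h2l2]
  -- Young's inequality `2XZ ≥ -X²/2 - 2Z²` with `X = p eˡ`, `Z = l eˡ⁻¹ t q`
  linear_combination (1 / 2) * mul_nonneg (mul_nonneg hb hγ)
      (sq_nonneg (p * e ^ l + 2 * (l * e ^ (l - 1) * t * q)))
    + mul_nonneg (mul_nonneg hb (sq_nonneg (p * e ^ l))) (sub_nonneg.mpr hγγ')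
    + 2 * mul_nonneg (mul_nonneg (mul_nonneg hb hγ) (sq_nonneg (l * e ^ (l - 1) * q)))
      (sub_nonneg.mpr ht)

theorem caccioppoli_pointwise {δ a₁ a₂ α e t p₁ p₂ q₁ q₂ φ₁ φ₂ : ℝ} {l : ℕ} (hα : 0 ≤ α)
    (hδ : 0 ≤ δ) (ha₁ : 0 ≤ a₁) (ha₂ : 0 ≤ a₂)
    (hφ₁ : φ₁ = e ^ (2 * l) * deriv (caccioppoliWeight α) t * p₁
      + 2 * l * e ^ (2 * l - 1) * caccioppoliWeight α t * q₁)
    (hφ₂ : φ₂ = e ^ (2 * l) * deriv (caccioppoliWeight α) t * p₂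
      + 2 * l * e ^ (2 * l - 1) * caccioppoliWeight α t * q₂) :
    (δ * (p₁ ^ 2 + p₂ ^ 2) + a₁ * p₁ ^ 2 + a₂ * p₂ ^ 2) * e ^ (2 * l) * (1 + t ^ 2) ^ α / 2
      - 2 * l ^ 2 * ((δ * (q₁ ^ 2 + q₂ ^ 2) + a₁ * q₁ ^ 2 + a₂ * q₂ ^ 2) * e ^ (2 * l - 2)
        * (1 + t ^ 2) ^ (α + 1))
      ≤ δ * (p₁ * φ₁ + p₂ * φ₂) + a₁ * p₁ * φ₁ + a₂ * p₂ * φ₂ := by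
  have hγ : 0 ≤ (1 + t ^ 2) ^ α := by positivity
  have hγγ' := one_add_sq_rpow_le_deriv_caccioppoliWeight hα t
  have ht : t ^ 2 ≤ 1 + t ^ 2 := by linarith
  rw [hφ₁, hφ₂, rpow_add_one (by positivity), caccioppoliWeight]
  linear_combination
    half_energy_sub_le_mul_test (p := p₁) (q := q₁) (e := e) (add_nonneg hδ ha₁) hγ hγγ' ht
      + half_energy_sub_le_mul_test (p := p₂) (q := q₂) (e := e) (add_nonneg hδ ha₂) hγ hγγ' ht

theorem integral_le_of_half_sub_le {X : Type*} [MeasurableSpace X] {μ : Measure X}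
    {L G W : X → ℝ} {K : ℝ} (hL : Integrable L μ) (hG : Integrable G μ) (hW : Integrable W μ)
    (hW0 : ∫ x, W x ∂μ = 0) (h : ∀ x, L x / 2 - K * G x ≤ W x) :
    ∫ x, L x ∂μ ≤ 2 * K * ∫ x, G x ∂μ := by
  have hmono : ∫ x, (L x / 2 - K * G x) ∂μ ≤ ∫ x, W x ∂μ :=
    integral_mono ((hL.div_const 2).sub (hG.const_mul K)) hW h
  rw [integral_sub (hL.div_const 2) (hG.const_mul K), integral_div, integral_const_mul,
    hW0] at hmono
  linarith

theorem integral_caccioppoli_le {δ α : ℝ} {l : ℕ} {a₁ a₂ w η : ℝ² → ℝ} (hl : 1 ≤ l)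
    (hα : 0 ≤ α) (hδ : 0 ≤ δ) (ha₁ : Continuous a₁) (ha₂ : Continuous a₂)
    (ha₁0 : ∀ x, 0 ≤ a₁ x) (ha₂0 : ∀ x, 0 ≤ a₂ x) (hw : ContDiff ℝ 1 w) (hη : ContDiff ℝ 1 η)
    (hηc : HasCompactSupport η)
    (hweak : ∫ x, (δ * (pd 0 w x * pd 0 (caccioppoliTest l α η w) x
        + pd 1 w x * pd 1 (caccioppoliTest l α η w) x)
      + a₁ x * pd 0 w x * pd 0 (caccioppoliTest l α η w) x
      + a₂ x * pd 1 w x * pd 1 (caccioppoliTest l α η w) x) = 0) :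
    ∫ x, (δ * (pd 0 w x ^ 2 + pd 1 w x ^ 2) + a₁ x * pd 0 w x ^ 2 + a₂ x * pd 1 w x ^ 2)
        * η x ^ (2 * l) * (1 + w x ^ 2) ^ α
      ≤ 4 * (l : ℝ) ^ 2 * ∫ x, (δ * (pd 0 η x ^ 2 + pd 1 η x ^ 2) + a₁ x * pd 0 η x ^ 2
        + a₂ x * pd 1 η x ^ 2) * η x ^ (2 * l - 2) * (1 + w x ^ 2) ^ (α + 1) := by
  set φ := caccioppoliTest l α η w
  have hφ : ContDiff ℝ 1 φ := hη.caccioppoliTest hw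
  have hint : ∀ {F : ℝ² → ℝ}, Continuous F → (∀ x ∉ tsupport η, F x = 0) → Integrable F :=
    fun hF h0 => hF.integrable_of_hasCompactSupport (HasCompactSupport.intro hηc h0)
  have hφη : ∀ x ∉ tsupport η, ∀ i, pd i φ x = 0 := fun x hx =>
    pd_eq_zero_of_notMem_tsupport
      fun h => hx (closure_mono (support_caccioppoliTest_subset (by omega)) h)
  have hpd_w := hw.continuous_pd le_rfl
  have hpd_η := hη.continuous_pd le_rfl
  have hpd_φ := hφ.continuous_pd le_rfl
  have hη_cont := hη.continuous
  have hΓ : ∀ β : ℝ, 0 ≤ β → Continuous fun x => (1 + w x ^ 2) ^ β := fun β hβ =>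
    (continuous_const.add (hw.continuous.pow 2)).rpow_const fun _ => Or.inr hβ
  have hΓα := hΓ α hα
  have hΓα1 := hΓ (α + 1) (by linarith)
  refine le_trans (integral_le_of_half_sub_le (K := 2 * l ^ 2) (hint (by fun_prop) fun x hx => ?_)
    (hint (by fun_prop) fun x hx => ?_) (hint (by fun_prop) fun x hx => ?_) hweak
    fun x => caccioppoli_pointwise (e := η x) (t := w x) (q₁ := pd 0 η x) (q₂ := pd 1 η x)
      hα hδ (ha₁0 x) (ha₂0 x) ?_ ?_) (le_of_eq (by ring))
  · simp [image_eq_zero_of_notMem_tsupport hx, show 2 * l ≠ 0 by omega]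
  · simp [pd_eq_zero_of_notMem_tsupport hx]
  · simp [hφη x hx]
  all_goals
    exact pd_caccioppoliTest (hη.differentiable one_ne_zero x) (hw.differentiable one_ne_zero x) _

theorem caccioppoli_splitting_general
    (Ω : Set (EuclideanSpace ℝ (Fin 2)))
    (f₁ f₂ : ℝ → ℝ) (hf₁ : ContDiff ℝ 2 f₁) (hf₂ : ContDiff ℝ 2 f₂)
    (c₁ c₂ cb₁ cb₂ μ₁ μ₂ : ℝ)
    (hc₁ : 0 < c₁) (hc₂ : 0 < c₂)
    (hell₁ : ∀ t : ℝ, c₁ * (1 + |t|) ^ (-μ₁) ≤ deriv (deriv f₁) t ∧ deriv (deriv f₁) t ≤ cb₁)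
    (hell₂ : ∀ t : ℝ, c₂ * (1 + |t|) ^ (-μ₂) ≤ deriv (deriv f₂) t ∧ deriv (deriv f₂) t ≤ cb₂)
    (l : ℕ) (hl : 1 ≤ l) (α : ℝ) (hα : 0 ≤ α) :
    ∃ c : ℝ, 0 < c ∧
      ∀ (δ : ℝ), 0 < δ → δ ≤ 1 →
      ∀ (u : EuclideanSpace ℝ (Fin 2) → ℝ), ContDiff ℝ (⊤ : ℕ∞) u →
      (∀ x ∈ Ω, δ * (pd 0 (pd 0 u) x + pd 1 (pd 1 u) x)
          + deriv (deriv f₁) (pd 0 u x) * pd 0 (pd 0 u) x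
          + deriv (deriv f₂) (pd 1 u x) * pd 1 (pd 1 u) x = 0) →
      ∀ (η : EuclideanSpace ℝ (Fin 2) → ℝ), ContDiff ℝ (⊤ : ℕ∞) η →
        HasCompactSupport η → tsupport η ⊆ Ω →
        (∀ x, 0 ≤ η x) → (∀ x, η x ≤ 1) →
      (∫ x in Ω,
          (δ * ((pd 0 (pd 0 u) x) ^ 2 + (pd 1 (pd 0 u) x) ^ 2)
            + deriv (deriv f₁) (pd 0 u x) * (pd 0 (pd 0 u) x) ^ 2
            + deriv (deriv f₂) (pd 1 u x) * (pd 1 (pd 0 u) x) ^ 2)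
          * η x ^ (2 * l) * (1 + (pd 0 u x) ^ 2) ^ α)
      ≤ c * ∫ x in Ω,
          (δ * ((pd 0 η x) ^ 2 + (pd 1 η x) ^ 2)
            + deriv (deriv f₁) (pd 0 u x) * (pd 0 η x) ^ 2
            + deriv (deriv f₂) (pd 1 u x) * (pd 1 η x) ^ 2)
          * η x ^ (2 * l - 2) * (1 + (pd 0 u x) ^ 2) ^ (α + 1) := by
  refine ⟨4 * l ^ 2, by positivity, fun δ hδ _ u hu hEuler η hη hηc hηΩ _ _ => ?_⟩
  have hu : ContDiff ℝ 3 u := hu.of_le (WithTop.coe_le_coe.mpr le_top)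
  have hη : ContDiff ℝ 2 η := hη.of_le (WithTop.coe_le_coe.mpr le_top)
  have hw : ContDiff ℝ 2 (pd 0 u) := hu.contDiff_pd (by norm_num) 0
  have hφη := support_caccioppoliTest_subset (l := l) (α := α) (η := η) (w := pd 0 u) (by omega)
  have hweak := integral_hess_pd_zero_eq_zero hf₁ hf₂ δ (hu.of_le (by norm_num)) hEuler
    (hη.caccioppoliTest hw) (hηc.mono hφη) ((closure_mono hφη).trans hηΩ)
  have hout : ∀ x ∉ Ω, x ∉ tsupport η := fun x hx h => hx (hηΩ h)
  rw [setIntegral_eq_integral_of_forall_compl_eq_zero fun x hx => ?_,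
    setIntegral_eq_integral_of_forall_compl_eq_zero fun x hx => ?_]
  · exact integral_caccioppoli_le hl hα hδ.le
      ((hf₁.deriv'.continuous_deriv le_rfl).comp (hu.continuous_pd (by norm_num) 0))
      ((hf₂.deriv'.continuous_deriv le_rfl).comp (hu.continuous_pd (by norm_num) 1))
      (fun x => (mul_pos hc₁ (rpow_pos_of_pos (by positivity) _)).le.trans (hell₁ _).1)
      (fun x => (mul_pos hc₂ (rpow_pos_of_pos (by positivity) _)).le.trans (hell₂ _).1)
      (hw.of_le (by norm_num)) (hη.of_le (by norm_num)) hηc hweak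
  · simp [pd_eq_zero_of_notMem_tsupport (hout x hx)]
  · simp [image_eq_zero_of_notMem_tsupport (hout x hx), show 2 * l ≠ 0 by omega]

/-- Caccioppoli-type inequality in the splitting setting:
`∫_Ω D²f_δ(∇u)(∇∂₁u,∇∂₁u) η^{2l} Γ₁^α ≤ c ∫_Ω D²f_δ(∇u)(∇η,∇η) η^{2l-2} Γ₁^{α+1}`,
with `c = c(α,l)` independent of `δ`, `u`, `η`. -/
theorem caccioppoli_splitting
    (Ω : Set (EuclideanSpace ℝ (Fin 2))) (hΩo : IsOpen Ω) (hΩb : Bornology.IsBounded Ω)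
    (f₁ f₂ : ℝ → ℝ) (hf₁ : ContDiff ℝ 2 f₁) (hf₂ : ContDiff ℝ 2 f₂)
    (c₁ c₂ cb₁ cb₂ μ₁ μ₂ : ℝ)
    (hc₁ : 0 < c₁) (hc₂ : 0 < c₂) (hcb₁ : 0 < cb₁) (hcb₂ : 0 < cb₂)
    (hμ₁ : 1 < μ₁) (hμ₂ : 1 < μ₂)
    (hell₁ : ∀ t : ℝ, c₁ * (1 + |t|) ^ (-μ₁) ≤ deriv (deriv f₁) t ∧ deriv (deriv f₁) t ≤ cb₁)
    (hell₂ : ∀ t : ℝ, c₂ * (1 + |t|) ^ (-μ₂) ≤ deriv (deriv f₂) t ∧ deriv (deriv f₂) t ≤ cb₂)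
    (l : ℕ) (hl : 1 ≤ l) (α : ℝ) (hα : 0 ≤ α) :
    ∃ c : ℝ, 0 < c ∧
      ∀ (δ : ℝ), 0 < δ → δ ≤ 1 →
      ∀ (u : EuclideanSpace ℝ (Fin 2) → ℝ), ContDiff ℝ (⊤ : ℕ∞) u →
      (∀ x ∈ Ω, δ * (pd 0 (pd 0 u) x + pd 1 (pd 1 u) x)
          + deriv (deriv f₁) (pd 0 u x) * pd 0 (pd 0 u) x
          + deriv (deriv f₂) (pd 1 u x) * pd 1 (pd 1 u) x = 0) →
      ∀ (η : EuclideanSpace ℝ (Fin 2) → ℝ), ContDiff ℝ (⊤ : ℕ∞) η →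
        HasCompactSupport η → tsupport η ⊆ Ω →
        (∀ x, 0 ≤ η x) → (∀ x, η x ≤ 1) →
      (∫ x in Ω,
          (δ * ((pd 0 (pd 0 u) x) ^ 2 + (pd 1 (pd 0 u) x) ^ 2)
            + deriv (deriv f₁) (pd 0 u x) * (pd 0 (pd 0 u) x) ^ 2
            + deriv (deriv f₂) (pd 1 u x) * (pd 1 (pd 0 u) x) ^ 2)
          * η x ^ (2 * l) * (1 + (pd 0 u x) ^ 2) ^ α)
      ≤ c * ∫ x in Ω,
          (δ * ((pd 0 η x) ^ 2 + (pd 1 η x) ^ 2)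
            + deriv (deriv f₁) (pd 0 u x) * (pd 0 η x) ^ 2
            + deriv (deriv f₂) (pd 1 u x) * (pd 1 η x) ^ 2)
          * η x ^ (2 * l - 2) * (1 + (pd 0 u x) ^ 2) ^ (α + 1) :=
  caccioppoli_splitting_general Ω f₁ f₂ hf₁ hf₂ c₁ c₂ cb₁ cb₂ μ₁ μ₂ hc₁ hc₂ hell₁ hell₂ l hl α hα
end

section
/- Let Ω ⊆ ℝ² be a bounded open set and u : Ω → ℝ a smooth function with |u| ≤ M on Ω for some M > 0. Set Γ₁ := 1 + (∂₁u)². Then for every s ≥ 0 and every integer l ≥ 1 there is a constant c > 0 depending only on M, s, l, such that for every η ∈ C_c^∞(Ω) with 0 ≤ η ≤ 1: ∫_Ω |∂₁u|² Γ₁^{s} η^{2l} dx ≤ c [ ∫_Ω |∂₁₁u| Γ₁^{s} η^{2l} dx + ∫_Ω |∇η|² η^{2l−2} Γ₁^{s} dx ]. -/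
open Real MeasureTheory

/-! Write the integrand as `∂₁u · w` with `w = ∂₁u (1 + (∂₁u)²)^s η^{2l}` and integrate by parts.
`∂₁w` consists of a `∂₁₁u` term with weight `(t (1 + t²)^s)' ≤ (1 + 2s)(1 + t²)^s` and a `∂₁η`
term; after bounding `u` by `M`, Young's inequality splits the latter into half the left-hand
side, which is absorbed, and `2 l² M² (∂₁η)² η^{2l-2} (1 + (∂₁u)²)^s`. -/

lemma hasDerivAt_mul_one_add_sq_rpow (s t : ℝ) :
    HasDerivAt (fun t : ℝ ↦ t * (1 + t ^ 2) ^ s)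
      ((1 + t ^ 2) ^ s + 2 * s * t ^ 2 * (1 + t ^ 2) ^ (s - 1)) t := by
  have h := ((hasDerivAt_pow 2 t).const_add 1).rpow_const (p := s) (Or.inl (by positivity))
  refine ((hasDerivAt_id' t).fun_mul h).congr_deriv ?_
  norm_num
  ring

lemma abs_deriv_mul_one_add_sq_rpow_le {s : ℝ} (hs : 0 ≤ s) (t : ℝ) :
    |(1 + t ^ 2) ^ s + 2 * s * t ^ 2 * (1 + t ^ 2) ^ (s - 1)| ≤ (1 + 2 * s) * (1 + t ^ 2) ^ s := by
  have hpos : 0 < 1 + t ^ 2 := by positivity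
  have h : t ^ 2 * (1 + t ^ 2) ^ (s - 1) ≤ (1 + t ^ 2) ^ s :=
    calc t ^ 2 * (1 + t ^ 2) ^ (s - 1) ≤ (1 + t ^ 2) * (1 + t ^ 2) ^ (s - 1) := by
          gcongr; linarith
      _ = (1 + t ^ 2) ^ s := by rw [rpow_sub_one hpos.ne']; field_simp
  rw [abs_of_nonneg (by positivity)]
  nlinarith

lemma abs_mul_deriv_pow_mul_le {l : ℕ} (hl : 1 ≤ l) {M U : ℝ} (hU : |U| ≤ M) (t e d : ℝ) :
    |t * (((2 * l : ℕ) : ℝ) * e ^ (2 * l - 1) * d) * U|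
      ≤ t ^ 2 * e ^ (2 * l) / 2 + 2 * l ^ 2 * M ^ 2 * (d ^ 2 * e ^ (2 * l - 2)) := by
  obtain ⟨k, rfl⟩ : ∃ k, l = k + 1 := ⟨l - 1, by omega⟩
  set X := |t * e ^ (k + 1)|
  set Y := |e ^ k * d|
  have hX : X ^ 2 = t ^ 2 * e ^ (2 * (k + 1)) := by simp only [X, sq_abs]; ring
  have hY : Y ^ 2 = d ^ 2 * e ^ (2 * (k + 1) - 2) := by
    simp only [Y, sq_abs, show 2 * (k + 1) - 2 = 2 * k by omega]; ring
  have hL : |t * (((2 * (k + 1) : ℕ) : ℝ) * e ^ (2 * (k + 1) - 1) * d) * U|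
      = 2 * (k + 1) * X * Y * |U| := by
    rw [show 2 * (k + 1) - 1 = (k + 1) + k by omega, pow_add]
    simp only [X, Y, abs_mul]
    push_cast
    rw [abs_of_nonneg (by positivity : (0 : ℝ) ≤ 2 * (k + 1))]
    ring
  have hXY : 0 ≤ X * Y := by positivity
  rw [hL, ← hX, ← hY]
  push_cast
  nlinarith [sq_nonneg (X - 2 * (k + 1) * M * Y), mul_le_mul_of_nonneg_left hU hXY]

lemma abs_deriv_mul_one_add_sq_rpow_mul_pow_mul_le {s M U : ℝ} {l : ℕ} (hs : 0 ≤ s) (hl : 1 ≤ l)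
    (hU : |U| ≤ M) (t Q e d : ℝ) :
    |(((1 + t ^ 2) ^ s + 2 * s * t ^ 2 * (1 + t ^ 2) ^ (s - 1)) * Q * e ^ (2 * l)
        + t * (1 + t ^ 2) ^ s * (((2 * l : ℕ) : ℝ) * e ^ (2 * l - 1) * d)) * U|
      ≤ M * (1 + 2 * s) * (|Q| * (1 + t ^ 2) ^ s * e ^ (2 * l))
        + t ^ 2 * (1 + t ^ 2) ^ s * e ^ (2 * l) / 2
        + 2 * l ^ 2 * M ^ 2 * (d ^ 2 * e ^ (2 * l - 2) * (1 + t ^ 2) ^ s) := by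
  set Γ := (1 + t ^ 2) ^ s
  have hΓ : 0 ≤ Γ := by positivity
  have he : 0 ≤ e ^ (2 * l) := (even_two_mul l).pow_nonneg e
  have h₁ : |((Γ + 2 * s * t ^ 2 * (1 + t ^ 2) ^ (s - 1)) * Q * e ^ (2 * l)) * U|
      ≤ M * (1 + 2 * s) * (|Q| * Γ * e ^ (2 * l)) := by
    rw [abs_mul, abs_mul, abs_mul, abs_of_nonneg he]
    calc _ ≤ (1 + 2 * s) * Γ * |Q| * e ^ (2 * l) * M := by
          gcongr
          exact abs_deriv_mul_one_add_sq_rpow_le hs t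
      _ = _ := by ring
  have h₂ : |t * Γ * (((2 * l : ℕ) : ℝ) * e ^ (2 * l - 1) * d) * U|
      ≤ Γ * (t ^ 2 * e ^ (2 * l) / 2 + 2 * l ^ 2 * M ^ 2 * (d ^ 2 * e ^ (2 * l - 2))) := by
    rw [show t * Γ * (((2 * l : ℕ) : ℝ) * e ^ (2 * l - 1) * d) * U
        = Γ * (t * (((2 * l : ℕ) : ℝ) * e ^ (2 * l - 1) * d) * U) by ring,
      abs_mul, abs_of_nonneg hΓ]
    exact mul_le_mul_of_nonneg_left (abs_mul_deriv_pow_mul_le hl hU t e d) hΓ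
  rw [add_mul]
  linarith [abs_add_le (((Γ + 2 * s * t ^ 2 * (1 + t ^ 2) ^ (s - 1)) * Q * e ^ (2 * l)) * U)
    (t * Γ * (((2 * l : ℕ) : ℝ) * e ^ (2 * l - 1) * d) * U)]

section

variable {E : Type*} [NormedAddCommGroup E] [NormedSpace ℝ E]

lemma fderiv_mul_one_add_sq_rpow_mul_pow_apply {p η : E → ℝ} (hp : Differentiable ℝ p)
    (hη : Differentiable ℝ η) (s : ℝ) (n : ℕ) (x v : E) :
    fderiv ℝ (fun y ↦ p y * (1 + p y ^ 2) ^ s * η y ^ n) x v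
      = ((1 + p x ^ 2) ^ s + 2 * s * p x ^ 2 * (1 + p x ^ 2) ^ (s - 1)) * fderiv ℝ p x v
          * η x ^ n
        + p x * (1 + p x ^ 2) ^ s * (n * η x ^ (n - 1) * fderiv ℝ η x v) := by
  have hφ := (hasDerivAt_mul_one_add_sq_rpow s (p x)).comp_hasFDerivAt x (hp x).hasFDerivAt
  have hηn := (hasDerivAt_pow n (η x)).comp_hasFDerivAt x (hη x).hasFDerivAt
  have h : HasFDerivAt (fun y ↦ p y * (1 + p y ^ 2) ^ s * η y ^ n) _ x := hφ.fun_mul hηn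
  rw [h.fderiv]
  simp only [add_apply, smul_apply, Function.comp_apply, smul_eq_mul]
  ring

lemma abs_fderiv_mul_one_add_sq_rpow_mul_pow_mul_le {p η u : E → ℝ} {M s : ℝ} {l : ℕ}
    (hp : Differentiable ℝ p) (hη : Differentiable ℝ η) (hs : 0 ≤ s) (hl : 1 ≤ l)
    (huM : ∀ x ∈ tsupport η, |u x| ≤ M) (v x : E) :
    |fderiv ℝ (fun y ↦ p y * (1 + p y ^ 2) ^ s * η y ^ (2 * l)) x v * u x|
      ≤ M * (1 + 2 * s) * (|fderiv ℝ p x v| * (1 + p x ^ 2) ^ s * η x ^ (2 * l))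
        + p x ^ 2 * (1 + p x ^ 2) ^ s * η x ^ (2 * l) / 2
        + 2 * l ^ 2 * M ^ 2 * (fderiv ℝ η x v ^ 2 * η x ^ (2 * l - 2) * (1 + p x ^ 2) ^ s) := by
  rw [fderiv_mul_one_add_sq_rpow_mul_pow_apply hp hη]
  by_cases hx : x ∈ tsupport η
  · exact abs_deriv_mul_one_add_sq_rpow_mul_pow_mul_le hs hl (huM x hx) _ _ _ _
  · have h2l : 2 * l ≠ 0 := by omega
    simp [image_eq_zero_of_notMem_tsupport hx, fderiv_of_notMem_tsupport ℝ hx, h2l]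

variable [FiniteDimensional ℝ E] [MeasurableSpace E] [BorelSpace E] {μ : Measure E}
  [μ.IsAddHaarMeasure]

theorem integral_mul_fderiv_eq_neg_fderiv_mul_of_hasCompactSupport {w u : E → ℝ}
    (hw : ContDiff ℝ 1 w) (hwc : HasCompactSupport w) (hu : ContDiff ℝ 1 u) (v : E) :
    ∫ x, w x * fderiv ℝ u x v ∂μ = -∫ x, fderiv ℝ w x v * u x ∂μ :=
  integral_mul_fderiv_eq_neg_fderiv_mul_of_integrable
    ((((hw.continuous_fderiv one_ne_zero).clm_apply continuous_const).mul hu.continuous)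
      |>.integrable_of_hasCompactSupport (hwc.fderiv_apply ℝ v).mul_right)
    (((hw.continuous.mul ((hu.continuous_fderiv one_ne_zero).clm_apply continuous_const)))
      |>.integrable_of_hasCompactSupport hwc.mul_right)
    ((hw.continuous.mul hu.continuous).integrable_of_hasCompactSupport hwc.mul_right)
    (fun _ _ ↦ (hw.differentiable one_ne_zero).differentiableAt)
    (fun _ _ ↦ (hu.differentiable one_ne_zero).differentiableAt)

theorem integral_sq_mul_one_add_sq_rpow_mul_pow_le {u η : E → ℝ} {M s : ℝ} {l : ℕ}
    (hu : ContDiff ℝ 2 u) (hη : ContDiff ℝ 1 η) (hηc : HasCompactSupport η)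
    (huM : ∀ x ∈ tsupport η, |u x| ≤ M) (hs : 0 ≤ s) (hl : 1 ≤ l) (v : E) :
    ∫ x, fderiv ℝ u x v ^ 2 * (1 + fderiv ℝ u x v ^ 2) ^ s * η x ^ (2 * l) ∂μ
      ≤ 2 * M * (1 + 2 * s) * ∫ x, |fderiv ℝ (fderiv ℝ u · v) x v|
            * (1 + fderiv ℝ u x v ^ 2) ^ s * η x ^ (2 * l) ∂μ
        + 4 * l ^ 2 * M ^ 2 * ∫ x, fderiv ℝ η x v ^ 2 * η x ^ (2 * l - 2)
            * (1 + fderiv ℝ u x v ^ 2) ^ s ∂μ := by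
  set p : E → ℝ := (fderiv ℝ u · v)
  set A : E → ℝ := fun x ↦ p x ^ 2 * (1 + p x ^ 2) ^ s * η x ^ (2 * l)
  set B : E → ℝ := fun x ↦ |fderiv ℝ p x v| * (1 + p x ^ 2) ^ s * η x ^ (2 * l)
  set C : E → ℝ := fun x ↦ fderiv ℝ η x v ^ 2 * η x ^ (2 * l - 2) * (1 + p x ^ 2) ^ s
  set w : E → ℝ := fun x ↦ p x * (1 + p x ^ 2) ^ s * η x ^ (2 * l)
  have hp : ContDiff ℝ 1 p := (hu.fderiv_right one_add_one_eq_two.le).clm_apply contDiff_const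
  have hΓ : ContDiff ℝ 1 fun x ↦ (1 + p x ^ 2) ^ s :=
    (contDiff_const.add (hp.pow 2)).rpow_const_of_ne fun x ↦ by positivity
  have hη2l : HasCompactSupport fun x ↦ η x ^ (2 * l) :=
    hηc.comp_left (g := (· ^ (2 * l))) (zero_pow (by omega))
  have hw : ContDiff ℝ 1 w := (hp.mul hΓ).mul (hη.pow _)
  have hdp : Continuous (fderiv ℝ p · v) :=
    (hp.continuous_fderiv one_ne_zero).clm_apply continuous_const
  have hdη : Continuous (fderiv ℝ η · v) :=
    (hη.continuous_fderiv one_ne_zero).clm_apply continuous_const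
  have hΓc := hΓ.continuous
  have hA : Integrable A μ :=
    (by fun_prop : Continuous A).integrable_of_hasCompactSupport hη2l.mul_left
  have hB : Integrable B μ :=
    (by fun_prop : Continuous B).integrable_of_hasCompactSupport hη2l.mul_left
  have hC : Integrable C μ := (by fun_prop : Continuous C).integrable_of_hasCompactSupport
    ((hηc.fderiv_apply ℝ v).comp_left (g := (· ^ 2)) (zero_pow two_ne_zero)).mul_right.mul_right
  have hibp := integral_mul_fderiv_eq_neg_fderiv_mul_of_hasCompactSupport (μ := μ) hw
    hη2l.mul_left (hu.of_le one_le_two) v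
  have hbound : ∫ x, A x ∂μ ≤ M * (1 + 2 * s) * ∫ x, B x ∂μ + (∫ x, A x ∂μ) / 2
      + 2 * l ^ 2 * M ^ 2 * ∫ x, C x ∂μ :=
    calc ∫ x, A x ∂μ = -∫ x, fderiv ℝ w x v * u x ∂μ := by
          rw [← hibp]; congr 1; ext x; simp only [A, w, p]; ring
      _ ≤ ∫ x, |fderiv ℝ w x v * u x| ∂μ := (neg_le_abs _).trans abs_integral_le_integral_abs
      _ ≤ ∫ x, (M * (1 + 2 * s) * B x + A x / 2 + 2 * l ^ 2 * M ^ 2 * C x) ∂μ :=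
          integral_mono_of_nonneg (.of_forall fun _ ↦ abs_nonneg _)
            (((hB.const_mul _).add (hA.div_const _)).add (hC.const_mul _))
            (.of_forall fun x ↦ abs_fderiv_mul_one_add_sq_rpow_mul_pow_mul_le
              (hp.differentiable one_ne_zero) (hη.differentiable one_ne_zero) hs hl huM v x)
      _ = _ := by
          rw [integral_add (f := fun x ↦ M * (1 + 2 * s) * B x + A x / 2)
              ((hB.const_mul _).add (hA.div_const _)) (hC.const_mul _),
            integral_add (hB.const_mul _) (hA.div_const _), integral_const_mul,
            integral_div, integral_const_mul]
  linarith

end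

theorem integral_pd_sq_mul_one_add_sq_rpow_mul_pow_le {u η : EuclideanSpace ℝ (Fin 2) → ℝ}
    {M s : ℝ} {l : ℕ} (hu : ContDiff ℝ 2 u) (hη : ContDiff ℝ 1 η) (hηc : HasCompactSupport η)
    (hη₀ : ∀ x, 0 ≤ η x) (huM : ∀ x ∈ tsupport η, |u x| ≤ M) (hM : 0 ≤ M) (hs : 0 ≤ s)
    (hl : 1 ≤ l) :
    ∫ x, pd 0 u x ^ 2 * (1 + pd 0 u x ^ 2) ^ s * η x ^ (2 * l)
      ≤ (2 * M * (1 + 2 * s) + 4 * l ^ 2 * M ^ 2)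
        * ((∫ x, |pd 0 (pd 0 u) x| * (1 + pd 0 u x ^ 2) ^ s * η x ^ (2 * l))
          + ∫ x, (pd 0 η x ^ 2 + pd 1 η x ^ 2) * η x ^ (2 * l - 2) * (1 + pd 0 u x ^ 2) ^ s) := by
  have hpd : ∀ i (f : EuclideanSpace ℝ (Fin 2) → ℝ),
      pd i f = (fderiv ℝ f · (EuclideanSpace.single i 1)) := fun _ _ ↦ rfl
  have key := integral_sq_mul_one_add_sq_rpow_mul_pow_le (μ := volume) hu hη hηc huM hs hl
    (EuclideanSpace.single 0 1)
  simp only [hpd] at key ⊢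
  set e₀ : EuclideanSpace ℝ (Fin 2) := EuclideanSpace.single 0 1
  set e₁ : EuclideanSpace ℝ (Fin 2) := EuclideanSpace.single 1 1
  have hdη (v) : Continuous (fderiv ℝ η · v) :=
    (hη.continuous_fderiv one_ne_zero).clm_apply continuous_const
  have hΓ : Continuous fun x ↦ (1 + fderiv ℝ u x e₀ ^ 2) ^ s :=
    (continuous_const.add ((((hu.continuous_fderiv two_ne_zero).clm_apply
      continuous_const)).pow 2)).rpow_const fun _ ↦ Or.inr hs
  have hC : Integrable (fun x ↦ (fderiv ℝ η x e₀ ^ 2 + fderiv ℝ η x e₁ ^ 2)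
      * η x ^ (2 * l - 2) * (1 + fderiv ℝ u x e₀ ^ 2) ^ s) :=
    (by fun_prop : Continuous _).integrable_of_hasCompactSupport
      (.intro hηc fun x hx ↦ by simp [fderiv_of_notMem_tsupport ℝ hx])
  have hC₁C : ∫ x, fderiv ℝ η x e₀ ^ 2 * η x ^ (2 * l - 2) * (1 + fderiv ℝ u x e₀ ^ 2) ^ s
      ≤ ∫ x, (fderiv ℝ η x e₀ ^ 2 + fderiv ℝ η x e₁ ^ 2)
        * η x ^ (2 * l - 2) * (1 + fderiv ℝ u x e₀ ^ 2) ^ s :=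
    integral_mono_of_nonneg (.of_forall fun x ↦ by have := hη₀ x; positivity) hC
      (.of_forall fun x ↦ by
        have := hη₀ x; dsimp only; gcongr; exact le_add_of_nonneg_right (sq_nonneg _))
  have hB₀ : 0 ≤ ∫ x, |fderiv ℝ (fderiv ℝ u · e₀) x e₀| * (1 + fderiv ℝ u x e₀ ^ 2) ^ s
      * η x ^ (2 * l) := integral_nonneg fun x ↦ by have := hη₀ x; positivity
  have hC₀ : 0 ≤ ∫ x, (fderiv ℝ η x e₀ ^ 2 + fderiv ℝ η x e₁ ^ 2)
      * η x ^ (2 * l - 2) * (1 + fderiv ℝ u x e₀ ^ 2) ^ s :=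
    integral_nonneg fun x ↦ by have := hη₀ x; positivity
  have ha : 0 ≤ 2 * M * (1 + 2 * s) := by positivity
  have hb : 0 ≤ 4 * (l : ℝ) ^ 2 * M ^ 2 := by positivity
  linarith [mul_le_mul_of_nonneg_left hC₁C hb, mul_nonneg ha hC₀, mul_nonneg hb hB₀]

theorem integration_by_parts_estimate_general
    (Ω : Set (EuclideanSpace ℝ (Fin 2)))
    (M : ℝ) (hM : 0 < M) (s : ℝ) (hs : 0 ≤ s) (l : ℕ) (hl : 1 ≤ l) :
    ∃ c : ℝ, 0 < c ∧
      ∀ (u : EuclideanSpace ℝ (Fin 2) → ℝ), ContDiff ℝ (⊤ : ℕ∞) u →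
      (∀ x ∈ Ω, |u x| ≤ M) →
      ∀ (η : EuclideanSpace ℝ (Fin 2) → ℝ), ContDiff ℝ (⊤ : ℕ∞) η →
        HasCompactSupport η → tsupport η ⊆ Ω →
        (∀ x, 0 ≤ η x) → (∀ x, η x ≤ 1) →
      (∫ x in Ω, (pd 0 u x) ^ 2 * (1 + (pd 0 u x) ^ 2) ^ s * η x ^ (2 * l))
      ≤ c * ((∫ x in Ω, |pd 0 (pd 0 u) x| * (1 + (pd 0 u x) ^ 2) ^ s * η x ^ (2 * l))
          + ∫ x in Ω, ((pd 0 η x) ^ 2 + (pd 1 η x) ^ 2) * η x ^ (2 * l - 2)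
              * (1 + (pd 0 u x) ^ 2) ^ s) := by
  refine ⟨2 * M * (1 + 2 * s) + 4 * l ^ 2 * M ^ 2, by positivity, ?_⟩
  intro u hu huM η hη hηc hηΩ hη₀ _
  have hΩc : ∀ x ∉ Ω, η x = 0 ∧ fderiv ℝ η x = 0 := fun x hx ↦
    ⟨image_eq_zero_of_notMem_tsupport (hx <| hηΩ ·), fderiv_of_notMem_tsupport ℝ (hx <| hηΩ ·)⟩
  have h2l : 2 * l ≠ 0 := by omega
  rw [setIntegral_eq_integral_of_forall_compl_eq_zero fun x hx ↦ by simp [hΩc x hx, h2l],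
    setIntegral_eq_integral_of_forall_compl_eq_zero fun x hx ↦ by simp [hΩc x hx, h2l],
    setIntegral_eq_integral_of_forall_compl_eq_zero fun x hx ↦ by simp [pd, hΩc x hx]]
  exact integral_pd_sq_mul_one_add_sq_rpow_mul_pow_le (hu.of_le (WithTop.coe_le_coe.2 le_top))
    (hη.of_le (WithTop.coe_le_coe.2 le_top)) hηc hη₀ (fun x hx ↦ huM x (hηΩ hx)) hM.le hs hl

/-- for bounded smooth `u` on a bounded open `Ω ⊆ ℝ²`, with `Γ₁ = 1 + (∂₁u)²`,
`∫ |∂₁u|² Γ₁^s η^{2l} ≤ c [∫ |∂₁₁u| Γ₁^s η^{2l} + ∫ |∇η|² η^{2l-2} Γ₁^s]`,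
where `c = c(M, s, l)`. -/
theorem integration_by_parts_estimate
    (Ω : Set (EuclideanSpace ℝ (Fin 2))) (hΩo : IsOpen Ω) (hΩb : Bornology.IsBounded Ω)
    (M : ℝ) (hM : 0 < M) (s : ℝ) (hs : 0 ≤ s) (l : ℕ) (hl : 1 ≤ l) :
    ∃ c : ℝ, 0 < c ∧
      ∀ (u : EuclideanSpace ℝ (Fin 2) → ℝ), ContDiff ℝ (⊤ : ℕ∞) u →
      (∀ x ∈ Ω, |u x| ≤ M) →
      ∀ (η : EuclideanSpace ℝ (Fin 2) → ℝ), ContDiff ℝ (⊤ : ℕ∞) η →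
        HasCompactSupport η → tsupport η ⊆ Ω →
        (∀ x, 0 ≤ η x) → (∀ x, η x ≤ 1) →
      (∫ x in Ω, (pd 0 u x) ^ 2 * (1 + (pd 0 u x) ^ 2) ^ s * η x ^ (2 * l))
      ≤ c * ((∫ x in Ω, |pd 0 (pd 0 u) x| * (1 + (pd 0 u x) ^ 2) ^ s * η x ^ (2 * l))
          + ∫ x in Ω, ((pd 0 η x) ^ 2 + (pd 1 η x) ^ 2) * η x ^ (2 * l - 2)
              * (1 + (pd 0 u x) ^ 2) ^ s) :=
  integration_by_parts_estimate_general Ω M hM s hs l hl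
end
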